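/- arXiv:2003.02682 — 4 statements merged into one kernel-verified Lean document; each statement's English description precedes it below -/
import Mathlib

section
/- Fix τ* ∈ (0,1) and define f : (0,1) → ℝ by f(r) = (−ln τ*)/√(1−r) for r < τ* and f(r) = (−ln r)/√(1−r) for r ≥ τ*. Then f attains its unique maximum on (0,1) at r = τ*, i.e. f(r) < f(τ*) for all r ∈ (0,1) with r ≠ τ*. -/
lemma gDeriv (x : ℝ) (hx : x ∈ Set.Ioo (0 : ℝ) 1) :
    HasDerivAt (fun y => -Real.log y / Real.sqrt (1 - y))
      (((-x⁻¹) * Real.sqrt (1 - x) - (-Real.log x) * ((-1) / (2 * Real.sqrt (1 - x)))) /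
        (Real.sqrt (1 - x)) ^ 2) x := by
  obtain ⟨hx0, hx1⟩ := hx
  have h1x : (0 : ℝ) < 1 - x := by linarith
  have hu : HasDerivAt (fun y : ℝ => -Real.log y) (-x⁻¹) x :=
    (Real.hasDerivAt_log (ne_of_gt hx0)).neg
  have hv0 : HasDerivAt (fun y : ℝ => 1 - y) (-1) x := by
    simpa using (hasDerivAt_id x).const_sub 1
  have hv : HasDerivAt (fun y : ℝ => Real.sqrt (1 - y)) ((-1) / (2 * Real.sqrt (1 - x))) x :=
    hv0.sqrt (ne_of_gt h1x)
  exact hu.div hv (by positivity)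

lemma gAnti : ∀ τ : ℝ, True → StrictAntiOn (fun y => -Real.log y / Real.sqrt (1 - y))
    (Set.Ioo (0 : ℝ) 1) := by
  intro τ _
  apply strictAntiOn_of_deriv_neg (convex_Ioo 0 1)
  · exact fun x hx => (gDeriv x hx).continuousAt.continuousWithinAt
  · intro x hx
    rw [interior_Ioo] at hx
    obtain ⟨hx0, hx1⟩ := hx
    have h1x : (0 : ℝ) < 1 - x := by linarith
    have hs : 0 < Real.sqrt (1 - x) := Real.sqrt_pos.2 h1x
    have hs2 : Real.sqrt (1 - x) ^ 2 = 1 - x := Real.sq_sqrt h1x.le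
    rw [(gDeriv x ⟨hx0, hx1⟩).deriv]
    apply div_neg_of_neg_of_pos _ (by positivity)
    have hlog : Real.log x⁻¹ < x⁻¹ - 1 := by
      refine Real.log_lt_sub_one_of_pos (inv_pos.2 hx0) ?_
      intro h
      have : x = 1 := by field_simp at h; linarith
      linarith
    rw [Real.log_inv] at hlog
    have hxlog : x * (-Real.log x) < 1 - x := by
      have := mul_lt_mul_of_pos_left hlog hx0
      rw [mul_sub, mul_inv_cancel₀ (ne_of_gt hx0)] at this
      linarith
    have hne : Real.sqrt (1 - x) ≠ 0 := ne_of_gt hs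
    rw [sub_neg, show -Real.log x * (-1 / (2 * Real.sqrt (1 - x)))
        = Real.log x / (2 * Real.sqrt (1 - x)) by ring,
      lt_div_iff₀ (by positivity)]
    have hxi : x * x⁻¹ = 1 := mul_inv_cancel₀ (ne_of_gt hx0)
    nlinarith [hs2, mul_pos hx0 hs, sq_nonneg (Real.sqrt (1 - x))]

/-- The limit of the scaled backward CUSUM detector under a single sharp break at
relative location `τ* ∈ (0,1)` attains its unique maximum on `(0,1)` at `r = τ*`. -/
theorem stmt11 (τ : ℝ) (hτ : τ ∈ Set.Ioo (0 : ℝ) 1)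
    (f : ℝ → ℝ)
    (hf : ∀ r, f r = if r < τ then (-Real.log τ) / Real.sqrt (1 - r)
                     else (-Real.log r) / Real.sqrt (1 - r)) :
    ∀ r ∈ Set.Ioo (0 : ℝ) 1, r ≠ τ → f r < f τ := by
  obtain ⟨hτ0, hτ1⟩ := hτ
  intro r hr hne
  obtain ⟨hr0, hr1⟩ := hr
  rw [hf r, hf τ, if_neg (lt_irrefl τ)]
  rcases lt_or_gt_of_ne hne with h | h
  · rw [if_pos h]
    have hlogτ : 0 < -Real.log τ := by
      have := Real.log_neg hτ0 hτ1; linarith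
    have hsτ : 0 < Real.sqrt (1 - τ) := Real.sqrt_pos.2 (by linarith)
    have hlt : Real.sqrt (1 - τ) < Real.sqrt (1 - r) :=
      Real.sqrt_lt_sqrt (by linarith) (by linarith)
    exact div_lt_div_of_pos_left hlogτ hsτ hlt
  · rw [if_neg (not_lt.2 h.le)]
    exact gAnti τ trivial ⟨hτ0, hτ1⟩ ⟨hr0, hr1⟩ h
end

section
/- Fix 1 < τ* ≤ τ_d and define f : (1, τ_d) → ℝ by f(r) = (ln τ_d − ln τ*)/√(τ_d − r) for r < τ* and f(r) = (ln τ_d − ln r)/√(τ_d − r) for r ≥ τ*. Then f attains its unique maximum on (1, τ_d) at r = τ* (when τ* < τ_d; if τ* = τ_d the supremum is approached as r → τ_d). -/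
/-!
Below `τ*` the numerator of `f` is constant while `√(τ_d - r)` shrinks as `r` grows, so `f`
increases strictly up to `τ*`. Above `τ*`, `f r = log (τ_d / r) / √(τ_d - r)`, whose
derivative has the sign of `r · log (τ_d / r) - 2 (τ_d - r)`; this is negative because
`log (τ_d / r) ≤ τ_d / r - 1`. If `τ* = τ_d`, then `f` vanishes on `(1, τ_d)`, so it is
constant, equal to its supremum `0`.
-/

open Filter Real Set

lemma log_sub_log_mul_le_sub {x b : ℝ} (hx : 0 < x) (hb : 0 < b) :
    (log b - log x) * x ≤ b - x := by
  have h := log_le_sub_one_of_pos (div_pos hb hx)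
  rw [log_div hb.ne' hx.ne', le_sub_iff_add_le, le_div_iff₀ hx] at h
  linarith

lemma hasDerivAt_log_sub_div_sqrt_sub {x b : ℝ} (hx : 0 < x) (hxb : x < b) :
    HasDerivAt (fun r => (log b - log r) / √(b - r))
      ((-x⁻¹ * √(b - x) + (log b - log x) / (2 * √(b - x))) / √(b - x) ^ 2) x := by
  have hs : √(b - x) ≠ 0 := (sqrt_pos.2 (sub_pos.2 hxb)).ne'
  have hnum := (hasDerivAt_log hx.ne').const_sub (log b)
  have hden := ((hasDerivAt_id' x).const_sub b).sqrt (sub_pos.2 hxb).ne'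
  refine (hnum.div hden hs).congr_deriv ?_
  ring

lemma strictAntiOn_log_sub_div_sqrt_sub (b : ℝ) :
    StrictAntiOn (fun r => (log b - log r) / √(b - r)) (Ioo 0 b) := by
  refine strictAntiOn_of_deriv_neg (convex_Ioo 0 b)
    (fun x hx => (hasDerivAt_log_sub_div_sqrt_sub hx.1 hx.2).continuousAt.continuousWithinAt)
    (fun x hx => ?_)
  rw [interior_Ioo] at hx
  obtain ⟨hx, hxb⟩ := hx
  rw [(hasDerivAt_log_sub_div_sqrt_sub hx hxb).deriv]
  have hsq : √(b - x) ^ 2 = b - x := sq_sqrt (sub_pos.2 hxb).le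
  have hkey := log_sub_log_mul_le_sub hx (hx.trans hxb)
  refine div_neg_of_neg_of_pos ?_ (by positivity)
  have hnum : -x⁻¹ * √(b - x) + (log b - log x) / (2 * √(b - x))
      = ((log b - log x) * x - 2 * (b - x)) / (2 * √(b - x) * x) := by
    field_simp
    rw [hsq]
    ring
  rw [hnum]
  exact div_neg_of_neg_of_pos (by linarith) (by positivity)

theorem stmt12_general (τ τd : ℝ) (h1 : 1 < τ)
    (f : ℝ → ℝ)
    (hf : ∀ r, f r = if r < τ then (Real.log τd - Real.log τ) / Real.sqrt (τd - r)
                     else (Real.log τd - Real.log r) / Real.sqrt (τd - r)) :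
    (τ < τd → ∀ r ∈ Set.Ioo (1 : ℝ) τd, r ≠ τ → f r < f τ) ∧
    (τ = τd → Tendsto f (nhdsWithin τd (Set.Ioo (1 : ℝ) τd))
        (nhds (⨆ r ∈ Set.Ioo (1 : ℝ) τd, f r))) := by
  have hfτ : f τ = (log τd - log τ) / √(τd - τ) := by simp [hf]
  constructor
  · intro hlt r hr hne
    rcases hne.lt_or_gt with hrτ | hτr
    · rw [hf, if_pos hrτ, hfτ]
      have hL : 0 < log τd - log τ := sub_pos.2 (log_lt_log (by linarith) hlt)
      exact div_lt_div_of_pos_left hL (sqrt_pos.2 (by linarith))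
        (sqrt_lt_sqrt (by linarith) (by linarith))
    · rw [hf, if_neg hτr.not_gt, hfτ]
      exact strictAntiOn_log_sub_div_sqrt_sub τd ⟨by linarith, hlt⟩ ⟨by linarith, hr.2⟩
        hτr
  · rintro rfl
    have hf_zero : EqOn f 0 (Ioo 1 τ) := fun r hr => by simp [hf, hr.2]
    have hsup : (⨆ r ∈ Ioo (1 : ℝ) τ, f r) = 0 := by
      simp_rw [iSup_congr fun r => iSup_congr fun hr : r ∈ Ioo 1 τ => hf_zero hr,
        Pi.zero_apply, Real.iSup_const_zero]
    rw [hsup]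
    exact tendsto_const_nhds.congr'
      (eventually_nhdsWithin_of_forall fun r hr => (hf_zero hr).symm)

/-- Monitoring analogue of break-date identification: with detection time `τ_d > 1`
and break date `τ* ∈ (1, τ_d]`, the limit `f` of the scaled backward CUSUM detector
attains its unique maximum on `(1, τ_d)` at `r = τ*` when `τ* < τ_d`; if `τ* = τ_d`
its supremum over `(1, τ_d)` is approached as `r → τ_d`. -/
theorem stmt12 (τ τd : ℝ) (h1 : 1 < τ) (hττd : τ ≤ τd)
    (f : ℝ → ℝ)
    (hf : ∀ r, f r = if r < τ then (Real.log τd - Real.log τ) / Real.sqrt (τd - r)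
                     else (Real.log τd - Real.log r) / Real.sqrt (τd - r)) :
    (τ < τd → ∀ r ∈ Set.Ioo (1 : ℝ) τd, r ≠ τ → f r < f τ) ∧
    (τ = τd → Tendsto f (nhdsWithin τd (Set.Ioo (1 : ℝ) τd))
        (nhds (⨆ r ∈ Set.Ioo (1 : ℝ) τd, f r))) :=
  stmt12_general τ τd h1 f hf
end

section
/- Let g : [0,1] → ℝ be bounded and piecewise constant and define h(r) = ∫_0^r g(z) dz − ∫_0^r (1/z)∫_0^z g(v) dv dz for r ∈ [0,1] (with the inner average interpreted as g(0) at z = 0). If g is constant on [0,1], then h ≡ 0 on [0,1]. Conversely, if h(r) = 0 for all r ∈ [0,1], then g is constant Lebesgue-almost everywhere on [0,1]. -/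
/-!
Write `F r = ∫₀ʳ g`. For bounded `g` the running average `F z / z` is bounded and continuous on
`(0, 1)`, so `h ≡ 0`, i.e. `F r = ∫₀ʳ F z / z`, makes `F` differentiable there with `F' = F / z`.
Then `(F / z)' = 0`, so `F z = K z` on `(0, 1)`, and by Lebesgue differentiation `g = F' = K`
almost everywhere.
-/

open MeasureTheory

/-- `g` is piecewise constant on `[0,1]`: there is a finite partition
`0 = p 0 ≤ p 1 ≤ ⋯ ≤ p n = 1` such that `g` is constant on each `[p i, p (i+1))`. -/
def PiecewiseConstantOn01 (g : ℝ → ℝ) : Prop :=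
  ∃ n : ℕ, ∃ p : Fin (n + 1) → ℝ, Monotone p ∧ p 0 = 0 ∧ p (Fin.last n) = 1 ∧
    ∀ i : Fin n, ∃ c : ℝ, ∀ x ∈ Set.Ico (p i.castSucc) (p i.succ), g x = c

open Set Filter Topology

theorem Fin.exists_mem_Ico_castSucc_succ {α : Type*} [LinearOrder α] {n : ℕ}
    (p : Fin (n + 1) → α) {x : α} (hx : x ∈ Ico (p 0) (p (Fin.last n))) :
    ∃ i : Fin n, x ∈ Ico (p i.castSucc) (p i.succ) := by
  induction n with
  | zero => simp at hx
  | succ n ih =>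
    by_cases hlt : x < p (Fin.last n).castSucc
    · obtain ⟨i, hi⟩ := ih (p ∘ Fin.castSucc) ⟨hx.1, hlt⟩
      exact ⟨i.castSucc, by rwa [Fin.succ_castSucc]⟩
    · exact ⟨Fin.last n, le_of_not_gt hlt, by simpa using hx.2⟩

theorem exists_eq_const_mul_of_hasDerivAt_div {F : ℝ → ℝ} {a b : ℝ} (ha : 0 ≤ a)
    (hF : ∀ x ∈ Ioo a b, HasDerivAt F (F x / x) x) : ∃ K, ∀ x ∈ Ioo a b, F x = K * x := by
  have hquot : ∀ x ∈ Ioo a b, HasDerivAt (fun y => F y / y) 0 x := by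
    intro x hx
    have hx0 : x ≠ 0 := (ha.trans_lt hx.1).ne'
    simpa [div_mul_cancel₀ _ hx0] using (hF x hx).fun_div (hasDerivAt_id' x) hx0
  obtain ⟨K, hK⟩ := isOpen_Ioo.exists_is_const_of_deriv_eq_zero isPreconnected_Ioo
    (fun x hx => (hquot x hx).differentiableAt.differentiableWithinAt)
    (fun x hx => (hquot x hx).deriv)
  refine ⟨K, fun x hx => ?_⟩
  rw [← hK x hx, div_mul_cancel₀ _ (ha.trans_lt hx.1).ne']

theorem ae_restrict_Icc_eq_of_hasDerivAt_integral {g f : ℝ → ℝ} {a b : ℝ}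
    (hg : IntervalIntegrable g volume a b)
    (hf : ∀ x ∈ Ioo a b, HasDerivAt (fun y => ∫ t in a..y, g t) (f x) x) :
    ∀ᵐ x ∂(volume.restrict (Icc a b)), g x = f x := by
  rcases le_or_gt a b with hab | hba
  · rw [← Measure.restrict_congr_set Ioo_ae_eq_Icc]
    filter_upwards [ae_restrict_of_ae hg.ae_hasDerivAt_integral, ae_restrict_mem measurableSet_Ioo]
      with x hx hxab
    exact (hx (by simpa [uIcc_of_le hab] using Ioo_subset_Icc_self hxab) a left_mem_uIcc).unique
      (hf x hxab)
  · simp [Icc_eq_empty_of_lt hba]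

theorem PiecewiseConstantOn01.aestronglyMeasurable {g : ℝ → ℝ} (hg : PiecewiseConstantOn01 g) :
    AEStronglyMeasurable g (volume.restrict (Icc 0 1)) := by
  obtain ⟨n, p, -, hp0, hp1, hconst⟩ := hg
  rw [← Measure.restrict_congr_set Ico_ae_eq_Icc]
  have hcover : Ico (0 : ℝ) 1 ⊆ ⋃ i : Fin n, Ico (p i.castSucc) (p i.succ) := fun x hx => by
    rw [← hp0, ← hp1] at hx
    simpa using Fin.exists_mem_Ico_castSucc_succ p hx
  refine AEStronglyMeasurable.mono_set hcover (aestronglyMeasurable_iUnion_iff.2 fun i => ?_)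
  obtain ⟨c, hc⟩ := hconst i
  exact aestronglyMeasurable_const.congr
    ((ae_restrict_mem measurableSet_Ico).mono fun x hx => (hc x hx).symm)

theorem integral_eq_integral_average_of_eqOn_const {g : ℝ → ℝ} {c r : ℝ} (hr : 0 ≤ r)
    (hg : EqOn g (fun _ => c) (Icc 0 r)) :
    (∫ z in (0 : ℝ)..r, g z) = ∫ z in (0 : ℝ)..r, (1 / z) * ∫ v in (0 : ℝ)..z, g v := by
  have hprim : ∀ z ∈ Icc 0 r, (∫ v in (0 : ℝ)..z, g v) = c * z := fun z hz => by
    rw [intervalIntegral.integral_congr (hg.mono ?_), intervalIntegral.integral_const,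
      smul_eq_mul, sub_zero, mul_comm]
    rw [uIcc_of_le hz.1]
    exact Icc_subset_Icc_right hz.2
  rw [hprim r ⟨hr, le_rfl⟩, intervalIntegral.integral_congr_ae (g := fun _ => c),
    intervalIntegral.integral_const, smul_eq_mul, sub_zero, mul_comm]
  refine Eventually.of_forall fun z hz => ?_
  rw [uIoc_of_le hr] at hz
  rw [hprim z (Ioc_subset_Icc_self hz), one_div_mul_eq_div, mul_div_cancel_right₀ _ hz.1.ne']

section AveragePrimitive

variable {g : ℝ → ℝ} {b : ℝ}

theorem continuousOn_average_primitive (hg : IntervalIntegrable g volume 0 b) :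
    ContinuousOn (fun z => (1 / z) * ∫ v in (0 : ℝ)..z, g v) (Ioo 0 b) :=
  (continuousOn_const.div continuousOn_id fun _ hz => hz.1.ne').mul
    ((intervalIntegral.continuousOn_primitive_interval' hg left_mem_uIcc).mono
      (Ioo_subset_Icc_self.trans Icc_subset_uIcc))

theorem abs_average_primitive_le {M z : ℝ} (hM : ∀ x ∈ Ioc 0 z, |g x| ≤ M) (hz : 0 < z) :
    |(1 / z) * ∫ v in (0 : ℝ)..z, g v| ≤ M := by
  have hprim : |∫ v in (0 : ℝ)..z, g v| ≤ M * z := by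
    simpa [abs_of_pos hz] using intervalIntegral.norm_integral_le_of_norm_le_const
      (a := 0) (b := z) (f := g) fun x hx => hM x (by rwa [uIoc_of_le hz.le] at hx)
  rwa [abs_mul, abs_div, abs_one, abs_of_pos hz, one_div_mul_eq_div, div_le_iff₀ hz]

theorem intervalIntegrable_average_primitive {M r : ℝ} (hg : IntervalIntegrable g volume 0 b)
    (hM : ∀ x ∈ Ioo 0 b, |g x| ≤ M) (hr : r ∈ Ioo 0 b) :
    IntervalIntegrable (fun z => (1 / z) * ∫ v in (0 : ℝ)..z, g v) volume 0 r := by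
  have hsub : Ioc 0 r ⊆ Ioo 0 b := Ioc_subset_Ioo_right hr.2
  rw [intervalIntegrable_iff_integrableOn_Ioc_of_le hr.1.le]
  refine IntegrableOn.of_bound measure_Ioc_lt_top
    (((continuousOn_average_primitive hg).mono hsub).aestronglyMeasurable measurableSet_Ioc) M
    ((ae_restrict_mem measurableSet_Ioc).mono fun z hz => ?_)
  exact abs_average_primitive_le (fun x hx => hM x ⟨hx.1, hx.2.trans_lt (hsub hz).2⟩) hz.1

theorem ae_eq_const_of_integral_eq_integral_average {M : ℝ}
    (hg : IntervalIntegrable g volume 0 b) (hM : ∀ x ∈ Ioo 0 b, |g x| ≤ M)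
    (heq : ∀ r ∈ Ioo 0 b,
      (∫ z in (0 : ℝ)..r, g z) = ∫ z in (0 : ℝ)..r, (1 / z) * ∫ v in (0 : ℝ)..z, g v) :
    ∃ c, ∀ᵐ x ∂(volume.restrict (Icc 0 b)), g x = c := by
  set F : ℝ → ℝ := fun r => ∫ v in (0 : ℝ)..r, g v
  have hderiv : ∀ x ∈ Ioo 0 b, HasDerivAt F (F x / x) x := fun x hx => by
    have hIoo : Ioo 0 b ∈ 𝓝 x := Ioo_mem_nhds hx.1 hx.2
    have hcont := continuousOn_average_primitive hg
    rw [← one_div_mul_eq_div]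
    refine (intervalIntegral.integral_hasDerivAt_right
      (intervalIntegrable_average_primitive hg hM hx)
      (hcont.stronglyMeasurableAtFilter isOpen_Ioo x hx)
      (hcont.continuousAt hIoo)).congr_of_eventuallyEq ?_
    exact eventually_of_mem hIoo heq
  obtain ⟨K, hK⟩ := exists_eq_const_mul_of_hasDerivAt_div le_rfl hderiv
  refine ⟨K, ae_restrict_Icc_eq_of_hasDerivAt_integral hg fun x hx => ?_⟩
  have hFK : F =ᶠ[𝓝 x] fun y => K * y := eventually_of_mem (Ioo_mem_nhds hx.1 hx.2) hK
  simpa using ((hasDerivAt_id' x).const_mul K).congr_of_eventuallyEq hFK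

end AveragePrimitive

/-- The drift `h(r) = ∫₀ʳ g − ∫₀ʳ (1/z)∫₀ᶻ g` vanishes identically on `[0,1]`
iff the bounded piecewise constant break function `g` is (a.e.) constant:
if `g` is constant on `[0,1]` then `h ≡ 0`, and if `h ≡ 0` on `[0,1]` then `g` is
constant Lebesgue-a.e. on `[0,1]`. -/
theorem stmt16 (g : ℝ → ℝ)
    (hbd : ∃ M : ℝ, ∀ x ∈ Set.Icc (0 : ℝ) 1, |g x| ≤ M)
    (hpc : PiecewiseConstantOn01 g)
    (h : ℝ → ℝ)
    (hh : ∀ r, h r = (∫ z in (0 : ℝ)..r, g z)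
        - ∫ z in (0 : ℝ)..r, (1 / z) * ∫ v in (0 : ℝ)..z, g v) :
    ((∀ x ∈ Set.Icc (0 : ℝ) 1, g x = g 0) → ∀ r ∈ Set.Icc (0 : ℝ) 1, h r = 0) ∧
    ((∀ r ∈ Set.Icc (0 : ℝ) 1, h r = 0) →
      ∃ c : ℝ, ∀ᵐ x ∂(volume.restrict (Set.Icc (0 : ℝ) 1)), g x = c) := by
  refine ⟨fun hconst r hr => ?_, fun hzero => ?_⟩
  · rw [hh, sub_eq_zero]
    exact integral_eq_integral_average_of_eqOn_const hr.1
      fun x hx => hconst x ⟨hx.1, hx.2.trans hr.2⟩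
  · obtain ⟨M, hM⟩ := hbd
    have hint : IntervalIntegrable g volume 0 1 :=
      (intervalIntegrable_iff_integrableOn_Icc_of_le zero_le_one).2 <|
        IntegrableOn.of_bound measure_Icc_lt_top hpc.aestronglyMeasurable M
          ((ae_restrict_mem measurableSet_Icc).mono hM)
    refine ae_eq_const_of_integral_eq_integral_average hint
      (fun x hx => hM x (Ioo_subset_Icc_self hx)) fun r hr => ?_
    rw [← sub_eq_zero, ← hh]
    exact hzero r (Ioo_subset_Icc_self hr)
end

section
/- Let h : [0,m] → ℝ^k be of bounded variation and let (Aₜ) be a sequence of k×k real matrices and A a fixed k×k matrix such that ε_T := sup_{r ∈ [0,m]} ‖T^{-1} ∑_{t=1}^{⌊rT⌋} (Aₜ − A)‖ → 0 as T → ∞, where ‖·‖ is the operator norm induced by the maximum norm. Then sup_{r ∈ [0,m]} ‖T^{-1} ∑_{t=1}^{⌊rT⌋} (Aₜ − A) h(t/T)‖ → 0 as T → ∞. -/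
/-!
Summation by parts writes `∑_{t ≤ N} Bₜ h(t/T)` as `S_N h(N/T) - ∑_{t < N} S_t (h((t+1)/T) - h(t/T))`,
where `S_n = ∑_{s ≤ n} B_s`. With `Bₜ = T⁻¹ (Aₜ - A)` every `S_n` with `n ≤ mT` has norm at most
`ε_T`, so the weighted sum is bounded by `ε_T (sup ‖h‖ + Var h) ≤ ε_T (‖h 0‖ + 2 Var h)`.
-/

open Matrix Finset Filter

/-- Operator norm of a matrix induced by the maximum norm on `Fin k → ℝ`
(the Pi sup norm). -/
noncomputable def opNormMax {k : ℕ} (M : Matrix (Fin k) (Fin k) ℝ) : ℝ :=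
  ⨆ v : {v : Fin k → ℝ // ‖v‖ ≤ 1}, ‖M.mulVec v.1‖

lemma opNormMax_nonneg {k : ℕ} (M : Matrix (Fin k) (Fin k) ℝ) : 0 ≤ opNormMax M :=
  Real.iSup_nonneg fun _ => norm_nonneg _

lemma norm_mulVec_le_opNormMax_mul {k : ℕ} (M : Matrix (Fin k) (Fin k) ℝ) (v : Fin k → ℝ) :
    ‖M *ᵥ v‖ ≤ opNormMax M * ‖v‖ := by
  have hbdd : BddAbove (Set.range fun u : {u : Fin k → ℝ // ‖u‖ ≤ 1} => ‖M *ᵥ u.1‖) := by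
    let := Matrix.linftyOpNormedAddCommGroup (m := Fin k) (n := Fin k) (α := ℝ)
    refine ⟨‖M‖, ?_⟩
    rintro _ ⟨⟨u, hu⟩, rfl⟩
    calc ‖M *ᵥ u‖ ≤ ‖M‖ * ‖u‖ := linfty_opNorm_mulVec M u
      _ ≤ ‖M‖ * 1 := by gcongr
      _ = ‖M‖ := mul_one _
  rcases eq_or_ne v 0 with rfl | hv
  · simp
  have hv' : 0 < ‖v‖ := norm_pos_iff.mpr hv
  have hunit : ‖‖v‖⁻¹ • v‖ ≤ 1 := by
    rw [norm_smul, norm_inv, norm_norm, inv_mul_cancel₀ hv'.ne']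
  calc ‖M *ᵥ v‖ = ‖M *ᵥ (‖v‖⁻¹ • v)‖ * ‖v‖ := by
        rw [mulVec_smul, norm_smul, norm_inv, norm_norm, mul_comm ‖v‖⁻¹,
          inv_mul_cancel_right₀ hv'.ne']
    _ ≤ opNormMax M * ‖v‖ := by
        gcongr
        exact le_ciSup hbdd ⟨_, hunit⟩

theorem Matrix.sum_Icc_mulVec_by_parts {R ι κ : Type*} [Ring R] [Fintype κ]
    (B : ℕ → Matrix ι κ R) (w : ℕ → κ → R) (N : ℕ) :
    ∑ t ∈ Icc 1 (N + 1), B t *ᵥ w t =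
      (∑ s ∈ Icc 1 (N + 1), B s) *ᵥ w (N + 1)
        - ∑ t ∈ Icc 1 N, (∑ s ∈ Icc 1 t, B s) *ᵥ (w (t + 1) - w t) := by
  induction N with
  | zero => simp
  | succ n ih =>
    rw [sum_Icc_succ_top (by omega), sum_Icc_succ_top (by omega) B,
      sum_Icc_succ_top (by omega) (fun t => (∑ s ∈ Icc 1 t, B s) *ᵥ (w (t + 1) - w t)), ih,
      add_mulVec, mulVec_sub]
    abel

lemma norm_sum_Icc_mulVec_le {k : ℕ} (B : ℕ → Matrix (Fin k) (Fin k) ℝ) (w : ℕ → Fin k → ℝ)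
    (N : ℕ) {ε : ℝ} (hε : ∀ n ≤ N + 1, opNormMax (∑ s ∈ Icc 1 n, B s) ≤ ε) :
    ‖∑ t ∈ Icc 1 (N + 1), B t *ᵥ w t‖ ≤
      ε * (‖w (N + 1)‖ + ∑ t ∈ Icc 1 N, ‖w (t + 1) - w t‖) := by
  have hS : ∀ n ≤ N + 1, ∀ v, ‖(∑ s ∈ Icc 1 n, B s) *ᵥ v‖ ≤ ε * ‖v‖ := fun n hn v =>
    (norm_mulVec_le_opNormMax_mul _ v).trans (by gcongr; exact hε n hn)
  rw [sum_Icc_mulVec_by_parts, mul_add, mul_sum]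
  refine (norm_sub_le _ _).trans (add_le_add (hS _ le_rfl _) ?_)
  refine (norm_sum_le _ _).trans (sum_le_sum fun t ht => hS t ?_ _)
  have := (mem_Icc.mp ht).2
  omega

theorem BoundedVariationOn.sum_norm_sub_le {α E : Type*} [LinearOrder α] [NormedAddCommGroup E]
    {f : α → E} {s : Set α} (hf : BoundedVariationOn f s) {u : ℕ → α} {a b : ℕ}
    (hu : MonotoneOn u (Set.Icc a b)) (us : ∀ i ∈ Set.Icc a b, u i ∈ s) :
    ∑ i ∈ Ico a b, ‖f (u (i + 1)) - f (u i)‖ ≤ (eVariationOn f s).toReal := by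
  have hsum : ∑ i ∈ Ico a b, ‖f (u (i + 1)) - f (u i)‖ =
      (∑ i ∈ Ico a b, edist (f (u (i + 1))) (f (u i))).toReal := by
    rw [ENNReal.toReal_sum fun _ _ => edist_ne_top _ _]
    simp only [edist_dist, dist_eq_norm, ENNReal.toReal_ofReal (norm_nonneg _)]
  rw [hsum]
  exact ENNReal.toReal_mono hf (eVariationOn.sum_le_of_monotoneOn_Icc hu us)

theorem BoundedVariationOn.norm_le {α E : Type*} [LinearOrder α] [NormedAddCommGroup E]
    {f : α → E} {s : Set α} (hf : BoundedVariationOn f s) {x y : α} (hx : x ∈ s) (hy : y ∈ s) :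
    ‖f x‖ ≤ ‖f y‖ + (eVariationOn f s).toReal := by
  have := hf.dist_le hx hy
  rw [dist_eq_norm] at this
  linarith [norm_sub_norm_le (f x) (f y)]

lemma le_iSup_Icc_floor_mul (g : ℕ → ℝ) {m T : ℝ} (hT : 0 < T) {n : ℕ} (hn : n ≤ m * T) :
    g n ≤ ⨆ r ∈ Set.Icc 0 m, g ⌊r * T⌋₊ := by
  have hbdd : BddAbove (Set.range fun r : ℝ => ⨆ _ : r ∈ Set.Icc 0 m, g ⌊r * T⌋₊) := by
    refine ((Set.finite_Iic ⌊m * T⌋₊).image g |>.insert 0).bddAbove.mono ?_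
    rintro _ ⟨r, rfl⟩
    dsimp only
    by_cases hr : r ∈ Set.Icc 0 m
    · rw [ciSup_pos hr]
      exact Set.mem_insert_of_mem _ ⟨_, Nat.floor_mono (by gcongr; exact hr.2), rfl⟩
    · have : IsEmpty (r ∈ Set.Icc 0 m) := ⟨hr⟩
      rw [Real.iSup_of_isEmpty]
      exact Set.mem_insert _ _
  have hr : (n : ℝ) / T ∈ Set.Icc 0 m := ⟨by positivity, (div_le_iff₀ hT).mpr hn⟩
  have hle := le_ciSup hbdd ((n : ℝ) / T)
  rwa [ciSup_pos hr, div_mul_cancel₀ _ hT.ne', Nat.floor_natCast] at hle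

lemma iSup_norm_smul_sum_mulVec_le {k : ℕ} {m : ℝ} (hm : 0 ≤ m) {h : ℝ → Fin k → ℝ}
    (hBV : BoundedVariationOn h (Set.Icc 0 m)) (B : ℕ → Matrix (Fin k) (Fin k) ℝ) {T : ℕ}
    (hT : 0 < T) :
    ⨆ r ∈ Set.Icc 0 m, ‖(T : ℝ)⁻¹ • ∑ t ∈ Icc 1 ⌊r * T⌋₊, B t *ᵥ h ((t : ℝ) / T)‖ ≤
      (⨆ r ∈ Set.Icc 0 m, opNormMax ((T : ℝ)⁻¹ • ∑ t ∈ Icc 1 ⌊r * T⌋₊, B t)) *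
        (‖h 0‖ + 2 * (eVariationOn h (Set.Icc 0 m)).toReal) := by
  set ε := ⨆ r ∈ Set.Icc 0 m, opNormMax ((T : ℝ)⁻¹ • ∑ t ∈ Icc 1 ⌊r * T⌋₊, B t)
  set V := (eVariationOn h (Set.Icc 0 m)).toReal
  have hT' : (0 : ℝ) < T := by exact_mod_cast hT
  have hε : 0 ≤ ε := Real.iSup_nonneg fun _ => Real.iSup_nonneg fun _ => opNormMax_nonneg _
  have hεV : 0 ≤ ε * (‖h 0‖ + 2 * V) := by positivity
  refine Real.iSup_le (fun r => Real.iSup_le (fun hr => ?_) hεV) hεV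
  have hfloor : (⌊r * T⌋₊ : ℝ) ≤ m * T :=
    (Nat.floor_le (by have := hr.1; positivity)).trans (by gcongr; exact hr.2)
  obtain hN | ⟨N, hN⟩ : ⌊r * T⌋₊ = 0 ∨ ∃ N, ⌊r * T⌋₊ = N + 1 := by
    cases ⌊r * T⌋₊ <;> simp
  · rwa [hN, Icc_eq_empty (by omega), sum_empty, smul_zero, norm_zero]
  rw [hN] at hfloor ⊢
  have hgrid : ∀ i ∈ Set.Icc 1 (N + 1), (i : ℝ) / T ∈ Set.Icc 0 m := fun i hi =>
    ⟨by positivity, (div_le_iff₀ hT').mpr <| le_trans (by exact_mod_cast hi.2) hfloor⟩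
  have hpartial : ∀ n ≤ N + 1, opNormMax (∑ s ∈ Icc 1 n, (T : ℝ)⁻¹ • B s) ≤ ε := by
    intro n hn
    rw [← smul_sum]
    refine le_iSup_Icc_floor_mul (fun n => opNormMax ((T : ℝ)⁻¹ • ∑ t ∈ Icc 1 n, B t)) hT' ?_
    exact le_trans (by exact_mod_cast hn) hfloor
  rw [smul_sum]
  simp_rw [← smul_mulVec]
  calc _ ≤ ε * (‖h ((N + 1 : ℕ) / T)‖ + ∑ t ∈ Icc 1 N, ‖h ((t + 1 : ℕ) / T) - h (t / T)‖) :=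
        norm_sum_Icc_mulVec_le _ (fun t => h ((t : ℝ) / T)) N hpartial
    _ ≤ ε * ((‖h 0‖ + V) + V) := by
        gcongr
        · exact hBV.norm_le (hgrid _ ⟨by omega, le_rfl⟩) ⟨le_rfl, hm⟩
        · exact hBV.sum_norm_sub_le (u := fun i => (i : ℝ) / T)
            (fun i _ j _ hij => by dsimp only; gcongr) hgrid
    _ = ε * (‖h 0‖ + 2 * V) := by ring

/-- Lemma A.5 (deterministic version): if `h` has bounded variation on `[0,m]` and
`sup_{r∈[0,m]} ‖T⁻¹∑_{t≤⌊rT⌋}(Aₜ−A)‖ → 0` in the max-norm operator norm, then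
`sup_{r∈[0,m]} ‖T⁻¹∑_{t≤⌊rT⌋}(Aₜ−A)h(t/T)‖ → 0` as `T → ∞`. -/
theorem stmt17 (k : ℕ) (m : ℝ) (hm : 0 < m)
    (h : ℝ → Fin k → ℝ) (hBV : BoundedVariationOn h (Set.Icc 0 m))
    (A : ℕ → Matrix (Fin k) (Fin k) ℝ) (Alim : Matrix (Fin k) (Fin k) ℝ)
    (hA : Tendsto (fun T : ℕ =>
        ⨆ r ∈ Set.Icc (0 : ℝ) m,
          opNormMax ((T : ℝ)⁻¹ • ∑ t ∈ Finset.Icc 1 ⌊r * T⌋₊, (A t - Alim)))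
      atTop (nhds 0)) :
    Tendsto (fun T : ℕ =>
        ⨆ r ∈ Set.Icc (0 : ℝ) m,
          ‖(T : ℝ)⁻¹ • ∑ t ∈ Finset.Icc 1 ⌊r * T⌋₊,
              (A t - Alim).mulVec (h ((t : ℝ) / T))‖)
      atTop (nhds 0) := by
  have hupper := hA.mul_const (‖h 0‖ + 2 * (eVariationOn h (Set.Icc 0 m)).toReal)
  rw [zero_mul] at hupper
  refine tendsto_of_tendsto_of_tendsto_of_le_of_le' tendsto_const_nhds hupper
    (Eventually.of_forall fun T =>
      Real.iSup_nonneg fun _ => Real.iSup_nonneg fun _ => norm_nonneg _) ?_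
  filter_upwards [eventually_gt_atTop 0] with T hT
  exact iSup_norm_smul_sum_mulVec_le hm.le hBV _ hT
end
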